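/- Let Q be a reduced word for v with last letter r_α, Q' = Q minus its last letter, and suppose w r_α < w ≤ v r_α. Then the deletion of the last vertex ℓ(v) from Δ(Q,w) equals Δ(Q', w r_α) and the link of ℓ(v) in Δ(Q,w) equals Δ(Q', w). -/

import Mathlib

variable {B W : Type*} [DecidableEq B] [Group W] {M : CoxeterMatrix B} (cs : CoxeterSystem M W)

/-- The Bruhat order on a Coxeter group, via the subword property:
`u ≤ v` iff every reduced word for `v` contains a subword that is a reduced word for `u`. -/
def BruhatLe (u v : W) : Prop :=
  ∀ Q : List B, cs.IsReduced Q → cs.wordProd Q = v →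
    ∃ P : List B, P.Sublist Q ∧ cs.IsReduced P ∧ cs.wordProd P = u

/-- The Demazure product of a word in the simple reflections: multiply the letters in
order, omitting any letter that would decrease the length. -/
noncomputable def Dem (Q : List B) : W :=
  Q.foldl (fun w b => if cs.length w < cs.length (w * cs.simple b) then w * cs.simple b else w) 1

/-- The subword of `Q` obtained by deleting the letters at the positions in `F`
(positions are `0`-indexed); this is the complementary subword `Q ∖ F`. -/
def dmask (Q : List B) (F : Finset ℕ) : List B :=
  (Q.zipIdx.filter fun p => p.2 ∉ F).map Prod.fst

/-- The subword of `Q` consisting of the letters at the positions in `F` (in order). -/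
def smask (Q : List B) (F : Finset ℕ) : List B :=
  (Q.zipIdx.filter fun p => p.2 ∈ F).map Prod.fst

/-- `F` is a face of the subword complex `Δ(Q,w)`: `F` is a set of positions of `Q` such
that the complementary subword `Q ∖ F` contains a reduced word for `w`. -/
def IsFace (Q : List B) (w : W) (F : Finset ℕ) : Prop :=
  F ⊆ Finset.range Q.length ∧
    ∃ P : List B, P.Sublist (dmask Q F) ∧ cs.IsReduced P ∧ cs.wordProd P = w

/-- `F` is a facet (maximal face) of the subword complex `Δ(Q,w)`. -/
def IsFacet (Q : List B) (w : W) (F : Finset ℕ) : Prop :=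
  IsFace cs Q w F ∧ ∀ F' : Finset ℕ, IsFace cs Q w F' → F ⊆ F' → F' = F

/-!
Write `L := Q'`. Removing the last position from `F` turns `Q ∖ F` into `(L ∖ F) ++ [a]`, adding
it turns `Q ∖ F` into `L ∖ F`, so everything reduces to: if `ℓ(w sₐ) < ℓ(w)`, then `L ++ [a]`
contains a reduced word for `w` iff `L` contains one for `w sₐ`. Appending `a` to a reduced word
for `w sₐ` gives one for `w`. Conversely, a reduced subword for `w` either uses the final `a`,
and dropping it leaves a reduced word for `w sₐ`, or lies in `L`, and then the exchange property
deletes one of its letters to reach `w sₐ`.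

The exchange property comes from the classical parity argument: the maps
`(t, ε) ↦ (sᵢ t sᵢ, ε + [t = sᵢ])` on `W × ZMod 2` satisfy the Coxeter relations, and the
product over a word `ω` adds to `ε` the number of occurrences of `t` in the right inversion
sequence of `ω`. So that parity depends only on `π ω`; comparing `ω` with a word ending in `a`
shows that `sₐ` occurs in the right inversion sequence whenever `a` is a right descent of `π ω`.
-/

open List

section

variable {B W : Type*} [Group W] {M : CoxeterMatrix B} (cs : CoxeterSystem M W)

namespace CoxeterSystem

local prefix:100 "s" => cs.simple
local prefix:100 "π" => cs.wordProd
local prefix:100 "ris " => cs.rightInvSeq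

theorem rightInvSeq_alternatingWord (i j : B) (n : ℕ) :
    ris (alternatingWord i j n) = ((range n).map fun k => (s j * s i) ^ k * s j).reverse := by
  induction n generalizing i j with
  | zero => simp [alternatingWord]
  | succ n ih =>
    rw [alternatingWord_succ, rightInvSeq_concat, ih, range_succ_eq_map]
    simp only [map_cons, map_map, map_reverse, reverse_cons, concat_eq_append, pow_zero, one_mul]
    congr 2
    refine map_congr_left fun k _ => ?_
    simp only [Function.comp_apply, MulAut.conj_apply, cs.inv_simple, pow_succ', ← mul_pow_mul,
      mul_assoc]

theorem even_count_rightInvSeq_alternatingWord [DecidableEq W] (i j : B) (t : W) :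
    Even ((ris (alternatingWord i j (2 * M i j))).count t) := by
  have hperiod : ∀ k, (s j * s i) ^ (M i j + k) * s j = (s j * s i) ^ k * s j := fun k => by
    rw [pow_add, cs.simple_mul_simple_pow', one_mul]
  rw [rightInvSeq_alternatingWord, count_reverse, two_mul, range_add, map_append, map_map]
  simp only [Function.comp_def, hperiod, count_append]
  exact ⟨_, rfl⟩

theorem prod_map_alternatingWord_two_mul {G : Type*} [Monoid G] (f : B → G) (i j : B) (m : ℕ) :
    ((alternatingWord i j (2 * m)).map f).prod = (f i * f j) ^ m := by
  induction m with
  | zero => simp [alternatingWord]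
  | succ m ih =>
    have hodd : ¬ Even (2 * m + 1) := by simp [parity_simps]
    rw [mul_add_one, alternatingWord_succ', if_neg hodd, alternatingWord_succ',
      if_pos (even_two_mul m), map_cons, map_cons, prod_cons, prod_cons, ih, pow_succ', mul_assoc]

def parityAction [DecidableEq W] (i : B) : Function.End (W × ZMod 2) :=
  fun p => (s i * p.1 * s i, p.2 + if p.1 = s i then 1 else 0)

theorem prod_map_parityAction_apply [DecidableEq W] (ω : List B) (t : W) (ε : ZMod 2) :
    (ω.map cs.parityAction).prod (t, ε) =
      (π ω * t * (π ω)⁻¹, ε + (ris ω).count t) := by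
  induction ω generalizing t ε with
  | nil => show (t, ε) = _; simp
  | cons i ω ih =>
    have hconj : π ω * (t * (π ω)⁻¹) = s i ↔ (π ω)⁻¹ * (s i * π ω) = t := by
      constructor <;> intro h <;> rw [← h] <;> group
    rw [map_cons, prod_cons]
    change cs.parityAction i ((ω.map cs.parityAction).prod (t, ε)) = _
    rw [ih]
    simp only [parityAction, wordProd_cons, rightInvSeq, count_cons, beq_iff_eq, hconj,
      mul_inv_rev, cs.inv_simple, mul_assoc, Nat.cast_add, Nat.cast_ite, Nat.cast_one,
      Nat.cast_zero, add_assoc]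

theorem isLiftable_parityAction [DecidableEq W] : M.IsLiftable cs.parityAction := by
  intro i j
  rw [← prod_map_alternatingWord_two_mul]
  funext ⟨t, ε⟩
  have hprod : π (alternatingWord i j (2 * M i j)) = 1 := by
    rw [prod_alternatingWord_eq_mul_pow, if_pos (even_two_mul _), Nat.mul_div_cancel_left _ two_pos,
      one_mul, cs.simple_mul_simple_pow]
  rw [prod_map_parityAction_apply, hprod,
    ZMod.natCast_eq_zero_iff_even.mpr (cs.even_count_rightInvSeq_alternatingWord i j t)]
  show _ = (t, ε)
  simp

theorem natCast_count_rightInvSeq_eq_of_wordProd_eq [DecidableEq W] {ω ω' : List B}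
    (h : π ω = π ω') (t : W) :
    ((ris ω).count t : ZMod 2) = (ris ω').count t := by
  have hlift : ∀ ρ : List B,
      cs.lift ⟨cs.parityAction, cs.isLiftable_parityAction⟩ (π ρ) = (ρ.map cs.parityAction).prod :=
    fun ρ => by
      rw [wordProd, map_list_prod, map_map]
      exact congrArg prod (map_congr_left fun i _ => cs.lift_apply_simple _ i)
  have hprod : (ω.map cs.parityAction).prod = (ω'.map cs.parityAction).prod := by
    rw [← hlift, ← hlift, h]
  simpa [prod_map_parityAction_apply] using congrArg Prod.snd (congrFun hprod (t, 0))

theorem simple_mem_rightInvSeq_of_isRightDescent {ω : List B} {i : B}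
    (h : cs.IsRightDescent (π ω) i) : s i ∈ ris ω := by
  classical
  obtain ⟨τ, hτ, hτω⟩ := cs.exists_isReduced (π ω * s i)
  have hnotMem : s i ∉ ris τ := fun hmem => by
    have hlt := (cs.isRightInversion_of_mem_rightInvSeq hτ hmem).2
    rw [← hτω, cs.simple_mul_simple_cancel_right] at hlt
    exact lt_asymm h hlt
  have hnotMemConj : s i ∉ (ris τ).map (MulAut.conj (s i)) := by
    rw [mem_map]
    rintro ⟨x, hx, hconj⟩
    have hfix : MulAut.conj (s i) (s i) = s i := by simp
    exact hnotMem ((MulAut.conj (s i)).injective (hconj.trans hfix.symm) ▸ hx)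
  have hcount : (ris (τ.concat i)).count (s i) = 1 := by
    rw [rightInvSeq_concat, concat_eq_append, count_append, count_singleton_self,
      count_eq_zero_of_not_mem hnotMemConj]
  have hprod : π ω = π (τ.concat i) := by
    rw [wordProd_concat, ← hτω, cs.simple_mul_simple_cancel_right]
  have hparity := cs.natCast_count_rightInvSeq_eq_of_wordProd_eq hprod (s i)
  rw [hcount] at hparity
  by_contra hmem
  rw [count_eq_zero_of_not_mem hmem] at hparity
  exact zero_ne_one hparity

/-- The exchange property. -/
theorem exists_wordProd_eraseIdx_eq_mul_simple {ω : List B} {i : B}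
    (h : cs.IsRightDescent (π ω) i) : ∃ j < ω.length, π (ω.eraseIdx j) = π ω * s i := by
  obtain ⟨j, hj, hget⟩ := mem_iff_getElem.mp (cs.simple_mem_rightInvSeq_of_isRightDescent h)
  refine ⟨j, by simpa using hj, ?_⟩
  rw [← wordProd_mul_getD_rightInvSeq, getD_eq_getElem _ _ hj, hget]

theorem IsReduced.exists_sublist_isReduced_wordProd_eq_mul_simple {ω : List B} {i : B}
    (hω : cs.IsReduced ω) (h : cs.IsRightDescent (π ω) i) :
    ∃ P : List B, P.Sublist ω ∧ cs.IsReduced P ∧ π P = π ω * s i := by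
  obtain ⟨j, hj, hprod⟩ := cs.exists_wordProd_eraseIdx_eq_mul_simple h
  refine ⟨ω.eraseIdx j, eraseIdx_sublist ω j, ?_, hprod⟩
  have hdesc := cs.isRightDescent_iff.mp h
  have hlen := length_eraseIdx_add_one hj
  unfold IsReduced at hω ⊢
  rw [hprod]
  omega

def HasReducedSubword (L : List B) (w : W) : Prop :=
  ∃ P : List B, P.Sublist L ∧ cs.IsReduced P ∧ π P = w

theorem hasReducedSubword_append_singleton_iff {L : List B} {w : W} {a : B}
    (h : cs.IsRightDescent w a) :
    cs.HasReducedSubword (L ++ [a]) w ↔ cs.HasReducedSubword L (w * s a) := by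
  constructor
  · rintro ⟨P, hPL, hP, rfl⟩
    obtain ⟨P₁, P₂, rfl, hP₁, hP₂⟩ := sublist_append_iff.mp hPL
    rcases sublist_singleton.mp hP₂ with rfl | rfl
    · rw [append_nil] at h hP ⊢
      obtain ⟨P', hP'P, hP', hprod⟩ := hP.exists_sublist_isReduced_wordProd_eq_mul_simple cs h
      exact ⟨P', hP'P.trans hP₁, hP', hprod⟩
    · refine ⟨P₁, hP₁, by simpa using hP.take P₁.length, ?_⟩
      rw [wordProd_append, wordProd_singleton, simple_mul_simple_cancel_right]
  · rintro ⟨P, hPL, hP, hprod⟩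
    have hwP : π (P ++ [a]) = w := by
      rw [wordProd_append, wordProd_singleton, hprod, simple_mul_simple_cancel_right]
    refine ⟨P ++ [a], hPL.append (Sublist.refl [a]), ?_, hwP⟩
    unfold IsReduced at hP ⊢
    rw [hwP, length_append, length_singleton, ← hP, hprod, cs.isRightDescent_iff.mp h]

end CoxeterSystem

theorem dmask_append_singleton_of_notMem {L : List B} {F : Finset ℕ} (a : B)
    (hF : L.length ∉ F) : dmask (L ++ [a]) F = dmask L F ++ [a] := by
  simp [dmask, zipIdx_append, hF]

theorem dmask_append_singleton_insert_length (L : List B) (a : B) (F : Finset ℕ) :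
    dmask (L ++ [a]) (insert L.length F) = dmask L F := by
  have hfront : L.zipIdx.filter (fun p => p.2 ∉ insert L.length F) =
      L.zipIdx.filter (fun p => p.2 ∉ F) :=
    filter_congr fun p hp => by
      have hlt : p.2 < L.length := snd_lt_of_mem_zipIdx hp
      simp [hlt.ne]
  unfold dmask
  rw [zipIdx_append, filter_append, hfront]
  simp

theorem isFace_iff {Q : List B} {w : W} {F : Finset ℕ} :
    IsFace cs Q w F ↔ F ⊆ Finset.range Q.length ∧ cs.HasReducedSubword (dmask Q F) w :=
  Iff.rfl

theorem IsFace.length_notMem {Q : List B} {w : W} {F : Finset ℕ} (h : IsFace cs Q w F) :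
    Q.length ∉ F :=
  fun hmem => Finset.notMem_range_self (h.1 hmem)

theorem isFace_append_singleton_iff {L : List B} {w : W} {a : B} {F : Finset ℕ}
    (hF : L.length ∉ F) (h : cs.IsRightDescent w a) :
    IsFace cs (L ++ [a]) w F ↔ IsFace cs L (w * cs.simple a) F := by
  rw [isFace_iff, isFace_iff, dmask_append_singleton_of_notMem a hF,
    cs.hasReducedSubword_append_singleton_iff h, length_append, length_singleton,
    Finset.range_add_one, Finset.subset_insert_iff_of_notMem hF]

theorem isFace_append_singleton_insert_length_iff {L : List B} {w : W} {a : B} {F : Finset ℕ}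
    (hF : L.length ∉ F) : IsFace cs (L ++ [a]) w (insert L.length F) ↔ IsFace cs L w F := by
  rw [isFace_iff, isFace_iff, dmask_append_singleton_insert_length, length_append,
    length_singleton, Finset.range_add_one, Finset.insert_subset_insert_iff hF]

end

theorem vertex_decomposition (Q' : List B) (a : B) (w : W)
    (hdesc : cs.length (w * cs.simple a) < cs.length w) :
    (∀ F : Finset ℕ,
      (IsFace cs (Q' ++ [a]) w F ∧ Q'.length ∉ F) ↔ IsFace cs Q' (w * cs.simple a) F) ∧
    (∀ F : Finset ℕ,
      (Q'.length ∉ F ∧ IsFace cs (Q' ++ [a]) w (insert Q'.length F)) ↔ IsFace cs Q' w F) := by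
  refine ⟨fun F => ⟨fun ⟨hface, hF⟩ => ?_, fun hface => ?_⟩,
    fun F => ⟨fun ⟨hF, hface⟩ => ?_, fun hface => ?_⟩⟩
  · exact (isFace_append_singleton_iff cs hF hdesc).mp hface
  · exact ⟨(isFace_append_singleton_iff cs hface.length_notMem hdesc).mpr hface,
      hface.length_notMem⟩
  · exact (isFace_append_singleton_insert_length_iff cs hF).mp hface
  · exact ⟨hface.length_notMem,
      (isFace_append_singleton_insert_length_iff cs hface.length_notMem).mpr hface⟩
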